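/- arXiv:2602.07811 — 3 statements merged into one kernel-verified Lean document; each statement's English description precedes it below -/
import Mathlib

section
/- Under the hypotheses of the monotonicity lemma (BPR link costs t_a(x) = t_a^0 (1 + α (x / c_a)^β) with t_a^0, c_a, α > 0 and β ≥ 1, link flows x(f) = Δf, and path cost operator F(f)_{k,m}^{rs} = Σ_a (γ t_a(x_a(f)) + C_m l_a) δ_{ka}^{rs} with γ > 0), the operator F is strictly monotone with respect to link flows: for all nonnegative f, f' ∈ ℝ^n with Δf ≠ Δf', one has ⟨F(f) − F(f'), f − f'⟩ > 0. -/
/-!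
The operating-cost term `C_m l_a` does not depend on the flow, so it cancels in `F f - F f'`, and
exchanging the two sums (`⟨Δᵀ w, f - f'⟩ = ⟨w, Δ (f - f')⟩`) turns the pairing over paths into
`∑_a γ (t_a(x_a f) - t_a(x_a f')) (x_a f - x_a f')`. Nonnegative path flows give nonnegative link
flows, on which every BPR function is strictly increasing; hence each link term is nonnegative, and
it is positive on a link where the two link flows differ.
-/

open Finset

lemma bpr_strictMonoOn {t0 c α β : ℝ} (ht0 : 0 < t0) (hc : 0 < c) (hα : 0 < α) (hβ : 0 < β) :
    StrictMonoOn (fun u => t0 * (1 + α * (u / c) ^ β)) (Set.Ici 0) := by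
  intro u hu v _ huv
  have hpow := Real.rpow_lt_rpow (div_nonneg hu hc.le) (div_lt_div_of_pos_right huv hc) hβ
  dsimp only
  gcongr

section Pairing

variable {R : Type*} [Ring R] [LinearOrder R] [IsStrictOrderedRing R] {s : Set R} {g : R → R}
  {u v : R}

lemma MonotoneOn.sub_mul_sub_nonneg (hg : MonotoneOn g s) (hu : u ∈ s) (hv : v ∈ s) :
    0 ≤ (g u - g v) * (u - v) := by
  rcases le_total u v with h | h
  · exact mul_nonneg_of_nonpos_of_nonpos (sub_nonpos.2 (hg hu hv h)) (sub_nonpos.2 h)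
  · exact mul_nonneg (sub_nonneg.2 (hg hv hu h)) (sub_nonneg.2 h)

lemma StrictMonoOn.sub_mul_sub_pos (hg : StrictMonoOn g s) (hu : u ∈ s) (hv : v ∈ s)
    (huv : u ≠ v) : 0 < (g u - g v) * (u - v) := by
  rcases huv.lt_or_gt with h | h
  · exact mul_pos_of_neg_of_neg (sub_neg.2 (hg hu hv h)) (sub_neg.2 h)
  · exact mul_pos (sub_pos.2 (hg hv hu h)) (sub_pos.2 h)

end Pairing

lemma sum_sum_mul_mul_comm {A ι R : Type*} [Fintype A] [Fintype ι] [CommSemiring R]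
    (δ : A → ι → R) (w : A → R) (d : ι → R) :
    ∑ i, (∑ a, w a * δ a i) * d i = ∑ a, w a * ∑ i, δ a i * d i := by
  simp only [sum_mul, mul_sum, mul_assoc]
  exact sum_comm

theorem stmt_2_general
    {A ι : Type*} [Fintype A] [Fintype ι]
    (t0 c l : A → ℝ) (ht0 : ∀ a, 0 < t0 a) (hc : ∀ a, 0 < c a)
    (α β γ : ℝ) (hα : 0 < α) (hβ : 1 ≤ β) (hγ : 0 < γ)
    (δ : A → ι → ℝ) (hδ : ∀ a i, δ a i = 0 ∨ δ a i = 1)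
    (Cm : ι → ℝ)
    (t : A → ℝ → ℝ) (ht : ∀ a x, t a x = t0 a * (1 + α * (x / c a) ^ β))
    (x : A → (ι → ℝ) → ℝ) (hx : ∀ a f, x a f = ∑ i, δ a i * f i)
    (F : (ι → ℝ) → ι → ℝ)
    (hF : ∀ f i, F f i = ∑ a, (γ * t a (x a f) + Cm i * l a) * δ a i) :
    ∀ f f' : ι → ℝ, (∀ i, 0 ≤ f i) → (∀ i, 0 ≤ f' i) →
      (fun a => x a f) ≠ (fun a => x a f') →
      0 < ∑ i, (F f i - F f' i) * (f i - f' i) := by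
  intro f f' hf hf' hne
  have hflow_nonneg : ∀ g : ι → ℝ, (∀ i, 0 ≤ g i) → ∀ a, x a g ∈ Set.Ici 0 := fun g hg a => by
    rw [hx, Set.mem_Ici]
    refine sum_nonneg fun i _ => mul_nonneg ?_ (hg i)
    rcases hδ a i with h | h <;> simp [h]
  have hmono : ∀ a, StrictMonoOn (t a) (Set.Ici 0) := fun a => by
    rw [funext (ht a)]
    exact bpr_strictMonoOn (ht0 a) (hc a) hα (by linarith)
  have hcost : ∀ i, F f i - F f' i = ∑ a, γ * (t a (x a f) - t a (x a f')) * δ a i := fun i => by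
    simp only [hF, ← sum_sub_distrib]
    exact sum_congr rfl fun a _ => by ring
  have hflow : ∀ a, x a f - x a f' = ∑ i, δ a i * (f i - f' i) := fun a => by
    simp only [hx, ← sum_sub_distrib, mul_sub]
  obtain ⟨a₀, ha₀⟩ : ∃ a, x a f ≠ x a f' := not_forall.mp fun h => hne (funext h)
  have hpair : ∑ i, (F f i - F f' i) * (f i - f' i)
      = ∑ a, γ * ((t a (x a f) - t a (x a f')) * (x a f - x a f')) := by
    simp only [hcost, sum_sum_mul_mul_comm, hflow, mul_sum, mul_assoc]
  rw [hpair]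
  exact sum_pos'
    (fun a _ => mul_nonneg hγ.le <| (hmono a).monotoneOn.sub_mul_sub_nonneg
      (hflow_nonneg f hf a) (hflow_nonneg f' hf' a))
    ⟨a₀, mem_univ a₀, mul_pos hγ <| (hmono a₀).sub_mul_sub_pos
      (hflow_nonneg f hf a₀) (hflow_nonneg f' hf' a₀) ha₀⟩

theorem stmt_2
    {A ι : Type*} [Fintype A] [Fintype ι]
    (t0 c l : A → ℝ) (ht0 : ∀ a, 0 < t0 a) (hc : ∀ a, 0 < c a) (hl : ∀ a, 0 ≤ l a)
    (α β γ : ℝ) (hα : 0 < α) (hβ : 1 ≤ β) (hγ : 0 < γ)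
    (δ : A → ι → ℝ) (hδ : ∀ a i, δ a i = 0 ∨ δ a i = 1)
    (Cm : ι → ℝ) (hCm : ∀ i, 0 ≤ Cm i)
    (t : A → ℝ → ℝ) (ht : ∀ a x, t a x = t0 a * (1 + α * (x / c a) ^ β))
    (x : A → (ι → ℝ) → ℝ) (hx : ∀ a f, x a f = ∑ i, δ a i * f i)
    (F : (ι → ℝ) → ι → ℝ)
    (hF : ∀ f i, F f i = ∑ a, (γ * t a (x a f) + Cm i * l a) * δ a i) :
    ∀ f f' : ι → ℝ, (∀ i, 0 ≤ f i) → (∀ i, 0 ≤ f' i) →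
      (fun a => x a f) ≠ (fun a => x a f') →
      0 < ∑ i, (F f i - F f' i) * (f i - f' i) :=
  stmt_2_general t0 c l ht0 hc α β γ hα hβ hγ δ hδ Cm t ht x hx F hF
end

section
/- Let y ∈ ℝ^K and d > 0, and let S = {x ∈ ℝ^K : x ≥ 0, Σ_{i=1}^K x_i = d} be the simplex scaled by d. Then the Euclidean projection of y onto S exists, is unique, and is given componentwise by x_i = max(y_i − τ, 0), where τ ∈ ℝ is the unique real number satisfying Σ_{i=1}^K max(y_i − τ, 0) = d. -/
/-!
The map `τ ↦ ∑ i, max (y i - τ) 0` is continuous, vanishes for `τ ≥ max y`, exceeds `d` at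
`τ = y i₀ - d`, and is strictly decreasing wherever it is positive; so it takes the value `d > 0`
exactly once. For that `τ`, the point `p i = max (y i - τ) 0` lies in `S` and satisfies the
variational inequality `⟪y - p, z - p⟫ ≤ 0` on `S`: coordinatewise
`(y i - p i) * (z i - p i) ≤ τ * (z i - p i)`, and `∑ i, (z i - p i) = d - d = 0`. Expanding
`‖z - y‖²` around `p` then gives `‖p - y‖² + ‖z - p‖² ≤ ‖z - y‖²`, so `p` is the unique nearest
point of `S`.
-/

open Finset RealInnerProductSpace

lemma sub_max_mul_sub_max_le (a t w : ℝ) (hw : 0 ≤ w) :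
    (a - max (a - t) 0) * (w - max (a - t) 0) ≤ t * (w - max (a - t) 0) := by
  rcases le_total t a with h | h
  · rw [max_eq_left (sub_nonneg.2 h), sub_sub_cancel]
  · rw [max_eq_right (sub_nonpos.2 h), sub_zero, sub_zero]
    exact mul_le_mul_of_nonneg_right h hw

section WaterFilling

variable {ι : Type*} [Fintype ι]

lemma sum_max_sub_lt_of_lt (y : ι → ℝ) {s t : ℝ} (hst : s < t)
    (ht : 0 < ∑ i, max (y i - t) 0) :
    ∑ i, max (y i - t) 0 < ∑ i, max (y i - s) 0 := by
  obtain ⟨i, -, hi⟩ := exists_lt_of_sum_lt (s := univ) (f := fun _ => (0 : ℝ))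
    (by simpa using ht)
  have hti : t < y i := by simpa using hi
  refine sum_lt_sum (fun j _ => max_le_max (by linarith) le_rfl) ⟨i, mem_univ i, ?_⟩
  rw [max_eq_left (by linarith), max_eq_left (by linarith)]
  linarith

lemma exists_sum_max_sub_eq [Nonempty ι] (y : ι → ℝ) {d : ℝ} (hd : 0 ≤ d) :
    ∃ τ, ∑ i, max (y i - τ) 0 = d := by
  obtain ⟨i₀⟩ := ‹Nonempty ι›
  have hlow : ∑ i, max (y i - univ.sup' univ_nonempty y) 0 = 0 :=
    sum_eq_zero fun i _ => max_eq_right (sub_nonpos.2 (le_sup' y (mem_univ i)))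
  have hhigh : d ≤ ∑ i, max (y i - (y i₀ - d)) 0 :=
    calc d = max (y i₀ - (y i₀ - d)) 0 := by rw [sub_sub_cancel, max_eq_left hd]
      _ ≤ _ := single_le_sum (f := fun i => max (y i - (y i₀ - d)) 0)
          (fun i _ => le_max_right _ _) (mem_univ i₀)
  exact intermediate_value_univ _ _ (by fun_prop) ⟨hlow ▸ hd, hhigh⟩

lemma existsUnique_sum_max_sub_eq [Nonempty ι] (y : ι → ℝ) {d : ℝ} (hd : 0 < d) :
    ∃! τ, ∑ i, max (y i - τ) 0 = d := by
  obtain ⟨τ, hτ⟩ := exists_sum_max_sub_eq y hd.le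
  refine ⟨τ, hτ, fun σ hσ => ?_⟩
  by_contra hne
  rcases lt_or_gt_of_ne hne with h | h
  · exact (sum_max_sub_lt_of_lt y h (hτ ▸ hd)).ne (hτ.trans hσ.symm)
  · exact (sum_max_sub_lt_of_lt y h (hσ ▸ hd)).ne (hσ.trans hτ.symm)

lemma sum_sub_max_mul_sub_max_le_zero (y z : ι → ℝ) (τ : ℝ)
    (hz : ∀ i, 0 ≤ z i) (hsum : ∑ i, z i = ∑ i, max (y i - τ) 0) :
    ∑ i, (y i - max (y i - τ) 0) * (z i - max (y i - τ) 0) ≤ 0 :=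
  calc ∑ i, (y i - max (y i - τ) 0) * (z i - max (y i - τ) 0)
      ≤ ∑ i, τ * (z i - max (y i - τ) 0) :=
        sum_le_sum fun i _ => sub_max_mul_sub_max_le (y i) τ (z i) (hz i)
    _ = 0 := by rw [← mul_sum, sum_sub_distrib, hsum, sub_self, mul_zero]

end WaterFilling

section Projection

variable {E : Type*} [NormedAddCommGroup E] [InnerProductSpace ℝ E]

lemma norm_sub_sq_add_norm_sub_sq_le_of_inner_le_zero {y p z : E}
    (h : ⟪y - p, z - p⟫ ≤ 0) : ‖p - y‖ ^ 2 + ‖z - p‖ ^ 2 ≤ ‖z - y‖ ^ 2 := by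
  have hexp := norm_sub_sq_real (z - p) (y - p)
  rw [sub_sub_sub_cancel_right, real_inner_comm] at hexp
  rw [hexp, norm_sub_rev p y]
  linarith

lemma mem_and_forall_norm_sub_le_iff_eq_of_inner_le_zero {S : Set E} {y p : E} (hp : p ∈ S)
    (hvar : ∀ z ∈ S, ⟪y - p, z - p⟫ ≤ 0) (x : E) :
    (x ∈ S ∧ ∀ z ∈ S, ‖x - y‖ ≤ ‖z - y‖) ↔ x = p := by
  have hsq : ∀ z ∈ S, ‖p - y‖ ^ 2 + ‖z - p‖ ^ 2 ≤ ‖z - y‖ ^ 2 := fun z hz =>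
    norm_sub_sq_add_norm_sub_sq_le_of_inner_le_zero (hvar z hz)
  constructor
  · rintro ⟨hx, hmin⟩
    have hle : ‖x - y‖ ^ 2 ≤ ‖p - y‖ ^ 2 := by gcongr; exact hmin p hp
    have hdist : ‖x - p‖ ^ 2 = 0 := le_antisymm (by linarith [hsq x hx]) (sq_nonneg _)
    rwa [sq_eq_zero_iff, norm_eq_zero, sub_eq_zero] at hdist
  · rintro rfl
    refine ⟨hp, fun z hz => ?_⟩
    exact (pow_le_pow_iff_left₀ (norm_nonneg _) (norm_nonneg _) two_ne_zero).1
      (by linarith [hsq z hz, sq_nonneg ‖z - x‖])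

end Projection

theorem stmt_7
    {K : ℕ} (hK : 0 < K)
    (y : EuclideanSpace ℝ (Fin K)) (d : ℝ) (hd : 0 < d)
    (S : Set (EuclideanSpace ℝ (Fin K)))
    (hS : S = {x | (∀ i, 0 ≤ x i) ∧ ∑ i, x i = d}) :
    (∃! τ : ℝ, ∑ i, max (y i - τ) 0 = d) ∧
    (∀ τ : ℝ, (∑ i, max (y i - τ) 0 = d) →
      ∀ x : EuclideanSpace ℝ (Fin K),
        (x ∈ S ∧ ∀ z ∈ S, ‖x - y‖ ≤ ‖z - y‖) ↔ (∀ i, x i = max (y i - τ) 0)) := by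
  have : Nonempty (Fin K) := ⟨⟨0, hK⟩⟩
  refine ⟨existsUnique_sum_max_sub_eq _ hd, fun τ hτ x => ?_⟩
  set p : EuclideanSpace ℝ (Fin K) := WithLp.toLp 2 fun i => max (y i - τ) 0
  have hp : p ∈ S := hS ▸ ⟨fun i => le_max_right _ _, hτ⟩
  have hvar : ∀ z ∈ S, ⟪y - p, z - p⟫ ≤ 0 := by
    intro z hz
    rw [hS] at hz
    have := sum_sub_max_mul_sub_max_le_zero y z τ hz.1 (hz.2.trans hτ.symm)
    simpa [PiLp.inner_apply, mul_comm, p] using this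
  rw [mem_and_forall_norm_sub_le_iff_eq_of_inner_le_zero hp hvar x]
  exact ⟨fun h i => h ▸ rfl, fun h => PiLp.ext h⟩
end

section
/- Let C ⊆ ℝ^N be nonempty, closed and convex, let T : ℝ^N → ℝ^N be monotone and L-Lipschitz continuous, let z* be a solution of the variational inequality VI(T, C), and let τ > 0. Define the extra-gradient iterates z̃^k = Π_C(z^k − τ T(z^k)) and z^{k+1} = Π_C(z^k − τ T(z̃^k)). Then for every k, ‖z^{k+1} − z*‖² ≤ ‖z^k − z*‖² − (1 − τ²L²) ‖z^k − z̃^k‖². -/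
/-!
Testing the projection defining `z^{k+1}` at `z*` and the one defining `z̃^k` at `z^{k+1}`
(obtuse-angle characterisation of the projection), and using `⟪T z̃^k, z̃^k - z*⟫ ≥ 0`
(monotonicity plus the variational inequality at `z*`), an exact expansion of the squared norms
leaves `‖z^{k+1} - z*‖² ≤ ‖z^k - z*‖² - ‖z^k - z̃^k‖² - ‖z^{k+1} - z̃^k‖²
+ 2τ ⟪T z^k - T z̃^k, z^{k+1} - z̃^k⟫`. The last term is at most `2τL ‖z^k - z̃^k‖ ‖z^{k+1} - z̃^k‖`,
which `‖z^{k+1} - z̃^k‖²` absorbs up to `τ²L² ‖z^k - z̃^k‖²`.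
-/

open scoped RealInnerProductSpace

/-- `x` is the Euclidean projection of `y` onto the set `C`. -/
def IsProjOn {E : Type*} [NormedAddCommGroup E] (C : Set E) (y x : E) : Prop :=
  x ∈ C ∧ ∀ z ∈ C, ‖x - y‖ ≤ ‖z - y‖

section

variable {E : Type*} [NormedAddCommGroup E] [InnerProductSpace ℝ E] {C : Set E}

theorem IsProjOn.inner_sub_nonpos (hC : Convex ℝ C) {u p w : E} (hp : IsProjOn C u p)
    (hw : w ∈ C) : ⟪u - p, w - p⟫ ≤ 0 := by
  have hmin : IsLeast (Set.range fun w : C ↦ ‖u - w‖) ‖u - p‖ := by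
    refine ⟨⟨⟨p, hp.1⟩, rfl⟩, ?_⟩
    rintro _ ⟨w, rfl⟩
    simpa only [norm_sub_rev u] using hp.2 w w.2
  exact (norm_eq_iInf_iff_real_inner_le_zero hC hp.1).1 hmin.csInf_eq.symm w hw

theorem inner_sub_nonneg_of_monotone_of_solution {T : E → E}
    (hmono : ∀ u v, 0 ≤ ⟪T u - T v, u - v⟫) {z : E} (hz : ∀ w ∈ C, 0 ≤ ⟪T z, w - z⟫)
    {y : E} (hy : y ∈ C) : 0 ≤ ⟪T y, y - z⟫ := by
  have := add_nonneg (hmono y z) (hz y hy)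
  rwa [inner_sub_left, sub_add_cancel] at this

theorem extragradient_norm_sub_sq_le (hC : Convex ℝ C) {T : E → E} {L τ : ℝ} (hτ : 0 ≤ τ)
    {x y x' z : E} (hy : IsProjOn C (x - τ • T x) y) (hx' : IsProjOn C (x - τ • T y) x')
    (hz : z ∈ C) (hTy : 0 ≤ ⟪T y, y - z⟫) (hlip : ‖T x - T y‖ ≤ L * ‖x - y‖) :
    ‖x' - z‖ ^ 2 ≤ ‖x - z‖ ^ 2 - (1 - τ ^ 2 * L ^ 2) * ‖x - y‖ ^ 2 := by
  have hproj' : ⟪x - τ • T y - x', z - x'⟫ ≤ 0 := hx'.inner_sub_nonpos hC hz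
  have hproj : ⟪x - τ • T x - y, x' - y⟫ ≤ 0 := hy.inner_sub_nonpos hC hx'.1
  have hcs : ⟪T x - T y, x' - y⟫ ≤ L * ‖x - y‖ * ‖x' - y‖ :=
    (real_inner_le_norm _ _).trans (mul_le_mul_of_nonneg_right hlip (norm_nonneg _))
  have hexpand : ‖x - z‖ ^ 2 - ‖x' - z‖ ^ 2 - ‖x - y‖ ^ 2 - ‖x' - y‖ ^ 2
      = -2 * ⟪x - τ • T y - x', z - x'⟫ - 2 * ⟪x - τ • T x - y, x' - y⟫
        - 2 * τ * ⟪T x - T y, x' - y⟫ + 2 * τ * ⟪T y, y - z⟫ := by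
    simp only [← real_inner_self_eq_norm_sq, inner_sub_left, inner_sub_right,
      real_inner_smul_left]
    linarith [real_inner_comm x y, real_inner_comm x z, real_inner_comm x x',
      real_inner_comm y z, real_inner_comm y x', real_inner_comm z x', real_inner_comm (T x) x',
      real_inner_comm (T x) y, real_inner_comm (T y) x', real_inner_comm (T y) y,
      real_inner_comm (T y) z, real_inner_comm (T y) x]
  nlinarith [mul_le_mul_of_nonneg_left hcs hτ, mul_nonneg hτ hTy,
    sq_nonneg (τ * L * ‖x - y‖ - ‖x' - y‖)]

end

theorem stmt_12_general
    {N : ℕ}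
    (C : Set (EuclideanSpace ℝ (Fin N)))
    (hconv : Convex ℝ C)
    (T : EuclideanSpace ℝ (Fin N) → EuclideanSpace ℝ (Fin N))
    (L : ℝ)
    (hmono : ∀ u v, 0 ≤ ⟪T u - T v, u - v⟫)
    (hlip : ∀ u v, ‖T u - T v‖ ≤ L * ‖u - v‖)
    (zstar : EuclideanSpace ℝ (Fin N)) (hz1 : zstar ∈ C)
    (hz2 : ∀ z ∈ C, 0 ≤ ⟪T zstar, z - zstar⟫)
    (τ : ℝ) (hτ : 0 < τ)
    (z ztil : ℕ → EuclideanSpace ℝ (Fin N))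
    (hztil : ∀ k, IsProjOn C (z k - τ • T (z k)) (ztil k))
    (hz : ∀ k, IsProjOn C (z k - τ • T (ztil k)) (z (k + 1))) :
    ∀ k, ‖z (k + 1) - zstar‖ ^ 2
      ≤ ‖z k - zstar‖ ^ 2 - (1 - τ ^ 2 * L ^ 2) * ‖z k - ztil k‖ ^ 2 := fun k ↦
  extragradient_norm_sub_sq_le hconv hτ.le (hztil k) (hz k) hz1
    (inner_sub_nonneg_of_monotone_of_solution hmono hz2 (hztil k).1) (hlip _ _)

theorem stmt_12
    {N : ℕ}
    (C : Set (EuclideanSpace ℝ (Fin N)))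
    (hne : C.Nonempty) (hcl : IsClosed C) (hconv : Convex ℝ C)
    (T : EuclideanSpace ℝ (Fin N) → EuclideanSpace ℝ (Fin N))
    (L : ℝ) (hL : 0 ≤ L)
    (hmono : ∀ u v, 0 ≤ ⟪T u - T v, u - v⟫)
    (hlip : ∀ u v, ‖T u - T v‖ ≤ L * ‖u - v‖)
    (zstar : EuclideanSpace ℝ (Fin N)) (hz1 : zstar ∈ C)
    (hz2 : ∀ z ∈ C, 0 ≤ ⟪T zstar, z - zstar⟫)
    (τ : ℝ) (hτ : 0 < τ)
    (z ztil : ℕ → EuclideanSpace ℝ (Fin N))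
    (hztil : ∀ k, IsProjOn C (z k - τ • T (z k)) (ztil k))
    (hz : ∀ k, IsProjOn C (z k - τ • T (ztil k)) (z (k + 1))) :
    ∀ k, ‖z (k + 1) - zstar‖ ^ 2
      ≤ ‖z k - zstar‖ ^ 2 - (1 - τ ^ 2 * L ^ 2) * ‖z k - ztil k‖ ^ 2 :=
  stmt_12_general C hconv T L hmono hlip zstar hz1 hz2 τ hτ z ztil hztil hz
end
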